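/- arXiv:2011.14061 — 6 statements merged into one kernel-verified Lean document; each statement's English description precedes it below -/
import Mathlib

section
/- Let q = p^h, e ∣ h, b ∈ F_{p^e}, and T_b = {α ∈ F_q : Tr(α) = b}. Then for every a ∈ T_b, the product ∏_{α ∈ T_b, α ≠ a} (a - α) equals 1. -/
/-!
In characteristic `p` the trace polynomial `T` telescopes under Frobenius:
`T ^ p ^ e - T = X ^ q - X`. For `b` fixed by `x ↦ x ^ p ^ e` the same identity holds for
`g = T - b`, so `g` divides `X ^ q - X = ∏_{α ∈ F} (X - α)`. Hence the monic polynomial `g`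
is the product of `X - α` over its roots, which form the fiber `T_b`, and evaluating its
derivative at a root `a` gives `∏_{α ∈ T_b, α ≠ a} (a - α) = g'(a) = T'(a) = 1`.
-/

open Polynomial

/-- The trace polynomial `x + x^{p^e} + ⋯ + x^{p^{h-e}}` from `F_{p^h}` to `F_{p^e}`. -/
noncomputable def tracePoly (F : Type*) [Field F] (p e h : ℕ) : Polynomial F :=
  ∑ i ∈ Finset.range (h / e), X ^ (p ^ (e * i))

theorem FiniteField.splits_self_X_pow_card_sub_X (F : Type*) [Field F] [Fintype F] :
    (X ^ Fintype.card F - X : F[X]).Splits := by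
  rw [splits_iff_card_roots, FiniteField.roots_X_pow_card_sub_X,
    FiniteField.X_pow_card_sub_X_natDegree_eq F Fintype.one_lt_card]
  rfl

theorem FiniteField.eval_derivative_eq_prod_erase_of_dvd_X_pow_card_sub_X {F : Type*} [Field F]
    [Fintype F] [DecidableEq F] {f : F[X]} (hf : f.Monic)
    (hdvd : f ∣ X ^ Fintype.card F - X) {a : F} (ha : f.IsRoot a) :
    (derivative f).eval a = ∏ α ∈ (Finset.univ.filter f.IsRoot).erase a, (a - α) := by
  have hP : (X ^ Fintype.card F - X : F[X]) ≠ 0 :=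
    FiniteField.X_pow_card_sub_X_ne_zero F Fintype.one_lt_card
  have hnodup : f.roots.Nodup := Multiset.nodup_of_le (roots.le_of_dvd hP hdvd)
    (FiniteField.roots_X_pow_card_sub_X F ▸ Finset.univ.nodup)
  have hroots : f.roots = (Finset.univ.filter f.IsRoot).val := by
    rw [← hnodup.dedup, ← Multiset.toFinset_val]
    congr 1
    ext α
    simp [mem_roots hf.ne_zero]
  rw [((FiniteField.splits_self_X_pow_card_sub_X F).of_dvd hP hdvd).eval_root_derivative hf
    ((mem_roots hf.ne_zero).mpr ha), hroots]
  rfl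

section tracePoly

variable {F : Type*} [Field F] {p e h : ℕ}

theorem tracePoly_pow_sub_self [ExpChar F p] (hdvd : e ∣ h) :
    tracePoly F p e h ^ p ^ e - tracePoly F p e h = X ^ p ^ h - X := by
  obtain ⟨n, rfl⟩ := hdvd
  rcases e.eq_zero_or_pos with rfl | he
  · simp [tracePoly]
  rw [tracePoly, Nat.mul_div_cancel_left n he, sum_pow_char_pow]
  simp_rw [← pow_mul, ← pow_add, ← mul_add_one]
  simpa using Finset.sum_range_sub (fun i => (X : F[X]) ^ p ^ (e * i)) n

theorem tracePoly_sub_C_dvd [ExpChar F p] (hdvd : e ∣ h) {b : F} (hb : b ^ p ^ e = b) :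
    tracePoly F p e h - C b ∣ X ^ p ^ h - X := by
  have hfrob :
      (tracePoly F p e h - C b) ^ p ^ e - (tracePoly F p e h - C b) = X ^ p ^ h - X := by
    rw [sub_pow_expChar_pow, ← C_pow, hb, ← tracePoly_pow_sub_self hdvd]
    ring
  rw [← hfrob]
  exact dvd_sub (dvd_pow_self _ (expChar_pow_pos F p e).ne') dvd_rfl

theorem derivative_tracePoly [CharP F p] (he : 0 < e) (heh : e ≤ h) :
    derivative (tracePoly F p e h) = 1 := by
  obtain ⟨n, hn⟩ := Nat.exists_eq_add_one_of_ne_zero (Nat.div_pos heh he).ne'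
  rw [tracePoly, hn, Finset.sum_range_succ']
  simp [derivative_X_pow, CharP.cast_eq_zero, he.ne']

theorem monic_tracePoly_sub_C (hp : 1 < p) (he : 0 < e) (heh : e ≤ h) (b : F) :
    (tracePoly F p e h - C b).Monic := by
  obtain ⟨n, hn⟩ := Nat.exists_eq_add_one_of_ne_zero (Nat.div_pos heh he).ne'
  rw [tracePoly, hn, Finset.sum_range_succ, add_sub_right_comm, add_comm]
  refine monic_X_pow_add ((degree_sub_le _ _).trans_lt (max_lt ?_ ?_))
  · refine (degree_sum_le _ _).trans_lt ((Finset.sup_lt_iff (WithBot.bot_lt_coe _)).mpr ?_)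
    intro i hi
    rw [degree_X_pow]
    exact_mod_cast
      Nat.pow_lt_pow_right hp (Nat.mul_lt_mul_of_pos_left (Finset.mem_range.mp hi) he)
  · exact degree_C_le.trans_lt (by exact_mod_cast pow_pos (by omega) _)

end tracePoly

theorem prod_diffs_in_trace_fiber_eq_one (p e h : ℕ) (hp : p.Prime) (he : 0 < e)
    (hdvd : e ∣ h) (F : Type*) [Field F] [Fintype F] [DecidableEq F] [CharP F p]
    (hcard : Fintype.card F = p ^ h)
    (b : F) (hb : b ^ (p ^ e) = b)
    (a : F) (ha : (tracePoly F p e h).eval a = b) :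
    ∏ α ∈ (Finset.univ.filter (fun α : F => (tracePoly F p e h).eval α = b)).erase a,
        (a - α) = 1 := by
  have : Fact p.Prime := ⟨hp⟩
  have hh : 0 < h := Nat.pos_of_ne_zero fun h0 => by
    simpa [hcard, h0] using Fintype.one_lt_card (α := F)
  have heh : e ≤ h := Nat.le_of_dvd hh hdvd
  have hfiber : Finset.univ.filter (fun α => (tracePoly F p e h).eval α = b) =
      Finset.univ.filter (tracePoly F p e h - C b).IsRoot := by
    ext α
    simp [sub_eq_zero]
  rw [hfiber, ← FiniteField.eval_derivative_eq_prod_erase_of_dvd_X_pow_card_sub_X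
    (monic_tracePoly_sub_C hp.one_lt he heh b) (hcard ▸ tracePoly_sub_C_dvd hdvd hb)
    (by simpa [sub_eq_zero] using ha), derivative_sub, derivative_C, sub_zero,
    derivative_tracePoly he heh, eval_one]
end

section
/- Let q = p^h with p an odd prime and e a positive integer with e ≤ h - 1. Then F_{p^e}^* ⊆ {x^{p^e+1} : x ∈ F_q^*} if and only if 2e divides h. -/
/-- Parity of the geometric sum quotient: for odd `a`, `(a^m - 1)/(a-1)` has the
parity of `m`. Stated constructively. -/
lemma geom_quot_parity (a : ℕ) (ha : Odd a) (ha1 : 1 ≤ a) :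
    ∀ m : ℕ, ∃ S : ℕ, a ^ m - 1 = (a - 1) * S ∧ S % 2 = m % 2 := by
  intro m
  induction m with
  | zero => exact ⟨0, by simp⟩
  | succ m ih =>
    obtain ⟨S, hS, hSpar⟩ := ih
    have hA : 1 ≤ a ^ m := Nat.one_le_pow _ _ ha1
    have hA' : 1 ≤ a ^ (m + 1) := Nat.one_le_pow _ _ ha1
    refine ⟨a * S + 1, ?_, ?_⟩
    · zify [hA, hA', ha1] at hS ⊢
      rw [pow_succ]
      linear_combination (a : ℤ) * hS
    · have ha2 : a % 2 = 1 := by rcases ha with ⟨w, hw⟩; omega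
      have h2 := Nat.mul_mod a S 2
      rw [ha2, one_mul] at h2
      omega

theorem subfield_units_subset_powers_iff (p h e : ℕ) (hp : p.Prime) (hpodd : Odd p)
    (he : 1 ≤ e) (heh : e ≤ h - 1) (hdvd : e ∣ h)
    (F : Type*) [Field F] [Fintype F] (hcard : Fintype.card F = p ^ h) :
    (∀ x : F, x ≠ 0 → x ^ (p ^ e) = x → ∃ y : F, y ≠ 0 ∧ y ^ (p ^ e + 1) = x) ↔
      2 * e ∣ h := by
  classical
  have hp3 : 3 ≤ p := by
    rcases hpodd with ⟨w, hw⟩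
    have := hp.two_le
    omega
  have hh2 : 2 ≤ h := by omega
  have hpe3 : 3 ≤ p ^ e := le_trans hp3 (Nat.le_self_pow (by omega) p)
  have hpeodd : Odd (p ^ e) := hpodd.pow
  set n : ℕ := p ^ h - 1 with hn
  set k : ℕ := p ^ e - 1 with hkdef
  have hk2 : 2 ≤ k := by omega
  have hkeven : 2 ∣ k := by rcases hpeodd with ⟨w, hw⟩; omega
  have hph : 3 ≤ p ^ h := le_trans hp3 (Nat.le_self_pow (by omega) p)
  have hn2 : 2 ≤ n := by omega
  -- k ∣ n
  have hkn : k ∣ n := by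
    obtain ⟨j, hj⟩ := hdvd
    have := Nat.sub_dvd_pow_sub_pow (p ^ e) 1 j
    simpa [← pow_mul, ← hj] using this
  -- cardinality of units
  have hcardU : Fintype.card Fˣ = n := by
    rw [Fintype.card_units, hcard]
  have hncard : Nat.card Fˣ = n := by rw [Nat.card_eq_fintype_card, hcardU]
  obtain ⟨g, hg⟩ := IsCyclic.exists_generator (α := Fˣ)
  have hog : orderOf g = n := by
    rw [orderOf_eq_card_of_forall_mem_zpowers hg, hncard]
  have hpow_one : ∀ j : ℕ, g ^ j = 1 ↔ n ∣ j := by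
    intro j
    rw [← orderOf_dvd_iff_pow_eq_one, hog]
  constructor
  · -- forward: the condition implies 2e ∣ h
    intro hyp
    by_contra hnot
    obtain ⟨m, hm⟩ := hdvd
    have hmodd : m % 2 = 1 := by
      rcases Nat.even_or_odd m with hme | hmo
      · obtain ⟨r, hr⟩ := hme
        exact absurd ⟨r, by rw [hm, hr]; ring⟩ hnot
      · rcases hmo with ⟨w, hw⟩; omega
    obtain ⟨S, hS, hSpar⟩ := geom_quot_parity (p ^ e) hpeodd (by omega) m
    rw [← pow_mul, ← hm] at hS
    -- n = k * S, S odd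
    have hnkS : n = k * S := hS
    have hSodd : S % 2 = 1 := by omega
    obtain ⟨κ, hκ⟩ := hkeven
    obtain ⟨σ, hσ⟩ : ∃ σ, S = 2 * σ + 1 := ⟨S / 2, by omega⟩
    have hν : n = 2 * (k * σ + κ) := by rw [hnkS, hκ, hσ]; ring
    set ν : ℕ := k * σ + κ with hνdef
    have hn2ν : n = 2 * ν := hν
    -- t := g ^ S generates the subfield's multiplicative group
    set t : Fˣ := g ^ S with ht
    have htk : t ^ k = 1 := by
      rw [ht, ← pow_mul, hpow_one]
      exact ⟨1, by rw [hnkS]; ring⟩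
    have htpe : (t : F) ^ (p ^ e) = (t : F) := by
      have : t ^ (p ^ e) = t := by
        have hpe : p ^ e = k + 1 := by omega
        rw [hpe, pow_succ, htk, one_mul]
      rw [← Units.val_pow_eq_pow_val, this]
    obtain ⟨y, hy0, hy⟩ := hyp (t : F) (Units.ne_zero t) htpe
    set v : Fˣ := Units.mk0 y hy0 with hv
    have hvt : v ^ (p ^ e + 1) = t := by
      apply Units.ext
      rw [Units.val_pow_eq_pow_val]
      exact hy
    -- t ^ ν = 1
    obtain ⟨w, hw⟩ : ∃ w, p ^ e + 1 = 2 * w := ⟨(p ^ e + 1) / 2, by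
      rcases hpeodd with ⟨u, hu⟩; omega⟩
    have htν1 : t ^ ν = 1 := by
      rw [← hvt, ← pow_mul]
      have : (p ^ e + 1) * ν = (Fintype.card Fˣ) * w := by
        rw [hcardU, hn2ν, hw]; ring
      rw [this, pow_mul, pow_card_eq_one, one_pow]
    -- but t ^ ν = g ^ (S * ν) = g ^ (σ * n + ν) = g ^ ν ≠ 1
    have htν2 : t ^ ν = g ^ ν := by
      rw [ht, ← pow_mul]
      have : S * ν = n * σ + ν := by rw [hn2ν, hσ]; ring
      rw [this, pow_add, pow_mul,
        show g ^ n = 1 from (hpow_one n).2 dvd_rfl, one_pow, one_mul]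
    rw [htν2, hpow_one] at htν1
    have := Nat.le_of_dvd (by omega) htν1
    omega
  · -- backward: 2e ∣ h implies the condition
    intro h2e x hx hxe
    obtain ⟨j, hj⟩ := h2e
    -- n = k * ((p^e+1) * M)
    have hdd : p ^ (2 * e) - 1 ∣ n := by
      have := Nat.sub_dvd_pow_sub_pow (p ^ (2 * e)) 1 j
      simpa [← pow_mul, ← hj] using this
    obtain ⟨M, hM⟩ := hdd
    have hfac : p ^ (2 * e) - 1 = (p ^ e + 1) * k := by
      have := Nat.sq_sub_sq (p ^ e) 1
      simp only [one_pow] at this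
      rw [show (2 : ℕ) * e = e * 2 by ring, pow_mul, this]
    have hnfac : n = k * ((p ^ e + 1) * M) := by rw [hM, hfac]; ring
    set u : Fˣ := Units.mk0 x hx with hu
    have huk : u ^ k = 1 := by
      have hue : u ^ (p ^ e) = u := by
        apply Units.ext
        rw [Units.val_pow_eq_pow_val]
        exact hxe
      have hpe : p ^ e = k + 1 := by omega
      rw [hpe, pow_succ] at hue
      calc u ^ k = u ^ k * u * u⁻¹ := by group
        _ = u * u⁻¹ := by rw [hue]
        _ = 1 := mul_inv_cancel _
    obtain ⟨a, ha⟩ := Submonoid.mem_powers_iff u g |>.1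
      (mem_powers_iff_mem_zpowers.2 (hg u))
    have hdvda : (p ^ e + 1) * M ∣ a := by
      have h1 : n ∣ a * k := by
        rw [← hpow_one, pow_mul, ha, huk]
      rw [hnfac] at h1
      have h2 : k * ((p ^ e + 1) * M) ∣ k * a := by
        rwa [mul_comm a k] at h1
      exact (Nat.mul_dvd_mul_iff_left (by omega : 0 < k)).1 h2
    obtain ⟨c, hc⟩ := hdvda
    refine ⟨((g ^ (M * c) : Fˣ) : F), Units.ne_zero _, ?_⟩
    rw [← Units.val_pow_eq_pow_val, ← pow_mul]
    have : M * c * (p ^ e + 1) = a := by rw [hc]; ring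
    rw [this, ha, hu, Units.val_mk0]
end

section
/- Let q be an odd prime power, a_1,…,a_n distinct in F_q, v_i ∈ F_q^*, u_i = ∏_{j≠i}(a_i - a_j)^{-1}, and 1 ≤ m ≤ ⌊n/2⌋. Then GRS_m(a,v)^⊥ = GRS_{n-m}(a,v) (Euclidean dual) if and only if there exists λ ∈ F_q^* such that λ u_i = v_i^2 for all i = 1,…,n. -/
/-- The generalized Reed–Solomon code `GRS_k(a, v)` as a set of codewords. -/
def GRSset {F : Type*} [Field F] {n : ℕ} (a v : Fin n → F) (k : ℕ) :
    Set (Fin n → F) :=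
  {c | ∃ f : Polynomial F, f.degree < (k : ℕ) ∧ c = fun i => v i * f.eval (a i)}

/-!
The dual of `GRS_k(a, v)` is `GRS_{n-k}(a, u/v)`: for `deg h < n - 1` the sum `∑ u i * h (a i)`
is the coefficient of `X^(n-1)` in the Lagrange interpolant of `h`, i.e. in `h` itself, hence
zero; this gives one inclusion and dimensions give equality. So the condition reads
`GRS_{n-m}(a, u/v) = GRS_{n-m}(a, v)`, and dualizing once more, `GRS_m(a, v) = GRS_m(a, u/v)`.
For `2m ≤ n + 1` two GRS codes on the same points coincide only if their multipliers are
proportional: each multiplier vector lies in the other code, which produces polynomials `g, h` of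
degree `< m` with `g h = 1` at `n ≥ 2m - 1` points, so `g h = 1` and `g` is a constant.
-/

open Polynomial
open LinearMap (BilinForm)

namespace Polynomial

variable {R : Type*} [Semiring R] [NoZeroDivisors R]

theorem degree_mul_lt_of_lt {p q : R[X]} {k l : ℕ} (hp : p.degree < k) (hq : q.degree < l) :
    (p * q).degree < (k + l - 1 : ℕ) := by
  rcases eq_or_ne p 0 with rfl | hp0
  · simp
  rcases eq_or_ne q 0 with rfl | hq0
  · simp
  rw [← natDegree_lt_iff_degree_lt hp0] at hp
  rw [← natDegree_lt_iff_degree_lt hq0] at hq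
  rw [← natDegree_lt_iff_degree_lt (mul_ne_zero hp0 hq0), natDegree_mul hp0 hq0]
  omega

end Polynomial

namespace Lagrange

variable {F ι : Type*} [Field F] [DecidableEq ι]

theorem sum_nodalWeight_mul_eval_eq_zero {s : Finset ι} {v : ι → F} (hvs : Set.InjOn v s)
    {p : F[X]} (hp : p.degree < (s.card - 1 : ℕ)) :
    ∑ i ∈ s, nodalWeight s v i * p.eval (v i) = 0 := by
  have hsum := coeff_eq_sum hvs (hp.trans_le (by exact_mod_cast s.card.sub_le 1))
  rw [coeff_eq_zero_of_degree_lt hp] at hsum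
  simp only [hsum, nodalWeight, Finset.prod_inv_distrib, div_eq_inv_mul]

end Lagrange

section DotProduct

variable {R ι : Type*} [CommRing R] [Fintype ι]

theorem dotProductBilin_isRefl : (dotProductBilin R R : BilinForm R (ι → R)).IsRefl :=
  fun x y h => by
    rwa [dotProductBilin_apply_apply, dotProduct_comm, ← dotProductBilin_apply_apply R R]

theorem dotProductBilin_nondegenerate :
    (dotProductBilin R R : BilinForm R (ι → R)).Nondegenerate :=
  (LinearMap.IsRefl.nondegenerate_iff_separatingLeft dotProductBilin_isRefl).mpr
    fun x hx => dotProduct_eq_zero x (by simpa using hx)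

end DotProduct

namespace GeneralizedReedSolomon

variable {F ι : Type*} [Field F]

noncomputable def evalMap (a v : ι → F) : F[X] →ₗ[F] (ι → F) :=
  LinearMap.pi fun i => v i • leval (a i)

@[simp]
theorem evalMap_apply (a v : ι → F) (f : F[X]) (i : ι) :
    evalMap a v f i = v i * f.eval (a i) := rfl

noncomputable def code (a v : ι → F) (k : ℕ) : Submodule F (ι → F) :=
  (degreeLT F k).map (evalMap a v)

theorem mem_code {a v : ι → F} {k : ℕ} {c : ι → F} :
    c ∈ code a v k ↔ ∃ f : F[X], f.degree < k ∧ c = fun i => v i * f.eval (a i) := by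
  simp only [code, Submodule.mem_map, mem_degreeLT, funext_iff, evalMap_apply,
    eq_comm (a := c _)]

theorem coe_code {n : ℕ} (a v : Fin n → F) (k : ℕ) :
    (code a v k : Set (Fin n → F)) = GRSset a v k :=
  Set.ext fun _ => mem_code

theorem finrank_code [Fintype ι] {a v : ι → F} (ha : Function.Injective a)
    (hv : ∀ i, v i ≠ 0) {k : ℕ} (hk : k ≤ Fintype.card ι) :
    Module.finrank F (code a v k) = k := by
  have hinj : Function.Injective ((evalMap a v).domRestrict (degreeLT F k)) := by
    rw [← LinearMap.ker_eq_bot, LinearMap.ker_eq_bot']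
    rintro ⟨f, hf⟩ hf0
    have hroots : ∀ i ∈ Finset.univ, f.eval (a i) = 0 := fun i _ =>
      (mul_eq_zero.mp (congrFun hf0 i)).resolve_left (hv i)
    exact Subtype.ext <| eq_zero_of_degree_lt_of_eval_index_eq_zero _ ha.injOn
      ((mem_degreeLT.mp hf).trans_le (by simpa using hk)) hroots
  rw [code, ← LinearMap.range_domRestrict, LinearMap.finrank_range_of_inj hinj,
    (degreeLTEquiv F k).finrank_eq, Module.finrank_fin_fun]

theorem code_smul (a v : ι → F) {c : F} (hc : c ≠ 0) (k : ℕ) :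
    code a (c • v) k = code a v k := by
  have : evalMap a (c • v) = c • evalMap a v := by
    ext f i
    simp [mul_assoc]
  rw [code, code, this, Submodule.map_smul _ _ _ hc]

theorem exists_mul_eq_of_code_eq [Fintype ι] {a v w : ι → F} (ha : Function.Injective a)
    (hv : ∀ i, v i ≠ 0) {k : ℕ} (hk1 : 1 ≤ k) (hkn : 2 * k ≤ Fintype.card ι + 1)
    (h : code a w k = code a v k) : ∃ c ≠ 0, ∀ i, c * w i = v i := by
  have self_mem (x : ι → F) : x ∈ code a x k :=
    mem_code.mpr ⟨1, by rw [degree_one]; exact_mod_cast hk1, by simp⟩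
  obtain ⟨g, hg, hwg⟩ := mem_code.mp (h ▸ self_mem w)
  obtain ⟨f, hf, hvf⟩ := mem_code.mp (h.symm ▸ self_mem v)
  have heval : ∀ i ∈ Finset.univ, (f * g).eval (a i) = (1 : F[X]).eval (a i) := fun i _ => by
    have : v i * (f * g).eval (a i) = v i := by
      rw [eval_mul, mul_comm (f.eval _), ← mul_assoc, ← congrFun hwg i, ← congrFun hvf i]
    simpa using (mul_eq_left₀ (hv i)).mp this
  have hfg : f * g = 1 := by
    refine eq_of_degrees_lt_of_eval_index_eq _ ha.injOn ?_ ?_ heval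
    · rw [Finset.card_univ]
      exact (degree_mul_lt_of_lt hf hg).trans_le (by exact_mod_cast (by omega))
    · rw [degree_one, Finset.card_univ]
      exact_mod_cast (by omega)
  obtain ⟨c, hc, rfl⟩ := Polynomial.isUnit_iff.mp (IsUnit.of_mul_eq_one g hfg)
  exact ⟨c, hc.ne_zero, fun i => by simp [congrFun hvf i, mul_comm]⟩

theorem code_eq_code_iff [Fintype ι] {a v w : ι → F} (ha : Function.Injective a)
    (hv : ∀ i, v i ≠ 0) {k : ℕ} (hk1 : 1 ≤ k) (hkn : 2 * k ≤ Fintype.card ι + 1) :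
    code a w k = code a v k ↔ ∃ c ≠ 0, ∀ i, c * w i = v i := by
  refine ⟨exists_mul_eq_of_code_eq ha hv hk1 hkn, fun ⟨c, hc, hcw⟩ => ?_⟩
  rw [← code_smul a w hc k]
  congr
  exact funext hcw

section Dual

variable [Fintype ι] [DecidableEq ι]

noncomputable def dualMultiplier (a v : ι → F) (i : ι) : F :=
  Lagrange.nodalWeight Finset.univ a i / v i

theorem dualMultiplier_dualMultiplier {a : ι → F} (ha : Function.Injective a) (v : ι → F) :
    dualMultiplier a (dualMultiplier a v) = v :=
  funext fun i => div_div_cancel₀ (Lagrange.nodalWeight_ne_zero ha.injOn (Finset.mem_univ i))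

theorem dualMultiplier_ne_zero {a v : ι → F} (ha : Function.Injective a) (hv : ∀ i, v i ≠ 0)
    (i : ι) : dualMultiplier a v i ≠ 0 :=
  div_ne_zero (Lagrange.nodalWeight_ne_zero ha.injOn (Finset.mem_univ i)) (hv i)

theorem code_le_orthogonal_code {a v : ι → F} (ha : Function.Injective a) (hv : ∀ i, v i ≠ 0)
    {k : ℕ} (hk : k ≤ Fintype.card ι) :
    code a (dualMultiplier a v) (Fintype.card ι - k) ≤
      BilinForm.orthogonal (dotProductBilin F F) (code a v k) := by
  intro x hx
  obtain ⟨f, hf, rfl⟩ := mem_code.mp hx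
  refine BilinForm.mem_orthogonal_iff.mpr fun y hy => ?_
  obtain ⟨g, hg, rfl⟩ := mem_code.mp hy
  have hterm (i : ι) : v i * g.eval (a i) * (dualMultiplier a v i * f.eval (a i)) =
      Lagrange.nodalWeight Finset.univ a i * (g * f).eval (a i) := by
    rw [dualMultiplier, eval_mul]
    field_simp [hv i]
  have hdeg : (g * f).degree < ((Finset.univ : Finset ι).card - 1 : ℕ) := by
    simpa [Nat.add_sub_cancel' hk] using degree_mul_lt_of_lt hg hf
  simpa only [dotProductBilin_apply_apply, dotProduct, hterm]
    using Lagrange.sum_nodalWeight_mul_eval_eq_zero ha.injOn hdeg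

theorem orthogonal_code {a v : ι → F} (ha : Function.Injective a) (hv : ∀ i, v i ≠ 0)
    {k : ℕ} (hk : k ≤ Fintype.card ι) :
    BilinForm.orthogonal (dotProductBilin F F) (code a v k) =
      code a (dualMultiplier a v) (Fintype.card ι - k) := by
  refine (Submodule.eq_of_le_of_finrank_le (code_le_orthogonal_code ha hv hk) ?_).symm
  rw [BilinForm.finrank_orthogonal dotProductBilin_nondegenerate, finrank_code ha hv hk,
    finrank_code ha (dualMultiplier_ne_zero ha hv) (Nat.sub_le _ _),
    Module.finrank_fintype_fun_eq_card]

end Dual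

end GeneralizedReedSolomon

open GeneralizedReedSolomon in
theorem GRS_euclidean_dual_iff_general (n m : ℕ)
    (F : Type*) [Field F]
    (a v : Fin n → F) (ha : Function.Injective a) (hv : ∀ i, v i ≠ 0)
    (u : Fin n → F) (hu : ∀ i, u i = (∏ j ∈ Finset.univ.erase i, (a i - a j))⁻¹)
    (hm1 : 1 ≤ m) (hm2 : m ≤ n / 2) :
    {x : Fin n → F | ∀ y ∈ GRSset a v m, ∑ i, x i * y i = 0} = GRSset a v (n - m) ↔
      ∃ lam : F, lam ≠ 0 ∧ ∀ i, lam * u i = (v i) ^ 2 := by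
  set B : BilinForm F (Fin n → F) := dotProductBilin F F
  have hB : Function.Injective B.orthogonal := Function.LeftInverse.injective
    (BilinForm.orthogonal_orthogonal dotProductBilin_nondegenerate dotProductBilin_isRefl)
  have hdual : {x : Fin n → F | ∀ y ∈ GRSset a v m, ∑ i, x i * y i = 0} =
      B.orthogonal (code a v m) := by
    ext x
    simp [B, ← coe_code, dotProduct, mul_comm]
  have hcard : Fintype.card (Fin n) = n := Fintype.card_fin n
  rw [hdual, ← coe_code, SetLike.coe_set_eq, orthogonal_code ha hv (by omega), hcard]
  calc code a (dualMultiplier a v) (n - m) = code a v (n - m)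
      ↔ B.orthogonal (code a (dualMultiplier a v) (n - m)) = B.orthogonal (code a v (n - m)) :=
        hB.eq_iff.symm
    _ ↔ code a (dualMultiplier a v) m = code a v m := by
        rw [orthogonal_code ha (dualMultiplier_ne_zero ha hv) (by omega),
          orthogonal_code ha hv (by omega), dualMultiplier_dualMultiplier ha, hcard,
          Nat.sub_sub_self (by omega), eq_comm]
    _ ↔ ∃ c ≠ 0, ∀ i, c * dualMultiplier a v i = v i :=
        code_eq_code_iff ha hv hm1 (by omega)
    _ ↔ ∃ lam : F, lam ≠ 0 ∧ ∀ i, lam * u i = (v i) ^ 2 := by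
        refine exists_congr fun c => and_congr_right fun _ => forall_congr' fun i => ?_
        rw [dualMultiplier, Lagrange.nodalWeight, Finset.prod_inv_distrib, ← hu, mul_div_assoc',
          div_eq_iff (hv i), sq]

theorem GRS_euclidean_dual_iff (q n m : ℕ) (hq : IsPrimePow q) (hqodd : Odd q)
    (F : Type*) [Field F] [Fintype F] (hcard : Fintype.card F = q)
    (a v : Fin n → F) (ha : Function.Injective a) (hv : ∀ i, v i ≠ 0)
    (u : Fin n → F) (hu : ∀ i, u i = (∏ j ∈ Finset.univ.erase i, (a i - a j))⁻¹)
    (hm1 : 1 ≤ m) (hm2 : m ≤ n / 2) :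
    {x : Fin n → F | ∀ y ∈ GRSset a v m, ∑ i, x i * y i = 0} = GRSset a v (n - m) ↔
      ∃ lam : F, lam ≠ 0 ∧ ∀ i, lam * u i = (v i) ^ 2 :=
  GRS_euclidean_dual_iff_general n m F a v ha hv u hu hm1 hm2
end

section
/- Let q be an odd prime power, a_1,…,a_n distinct in F_q, v_i ∈ F_q^*, u_i = ∏_{j≠i}(a_i - a_j)^{-1}, and 1 ≤ m ≤ ⌊(n+1)/2⌋. Then GRS_m(a,v,∞)^⊥ = GRS_{n+1-m}(a,v,∞) (Euclidean dual) if and only if v_i^2 = -u_i for all i = 1,…,n. -/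
/-! With `v_i² = -u_i`, the Euclidean pairing of the codewords of `g` (degree `≤ n - m`) and
`f` (degree `≤ m - 1`) is `-∑ u_i (gf)(a_i) + g_{n-m} f_{m-1}`. By Lagrange interpolation,
`∑ u_i h(a_i)` is the coefficient of `X^{n-1}` of any `h` of degree `< n`, which for `h = gf` is
`g_{n-m} f_{m-1}`. Hence `GRS_{n+1-m} ⊆ GRS_m^⊥`, and both have dimension `n + 1 - m`.
Conversely, splitting the nodes other than `a_i` into the `m - 1` roots of a monic `f` and the
`n - m` roots of a monic `g` collapses the pairing to `v_i² / u_i + 1`. -/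

/-- The extended generalized Reed–Solomon code `GRS_k(a, v, ∞)` as a set of codewords. -/
def eGRSset {F : Type*} [Field F] {n : ℕ} (a v : Fin n → F) (k : ℕ) :
    Set (Fin (n + 1) → F) :=
  {c | ∃ f : Polynomial F, f.degree < (k : ℕ) ∧
    c = Fin.snoc (fun i => v i * f.eval (a i)) (f.coeff (k - 1))}

open Polynomial Finset Lagrange

section

variable {F ι : Type*} [Field F] [Fintype ι] [DecidableEq ι]

def euclideanDual (C : Submodule F (ι → F)) : Submodule F (ι → F) :=
  (Matrix.toBilin' 1).orthogonal C

lemma mem_euclideanDual {C : Submodule F (ι → F)} {x : ι → F} :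
    x ∈ euclideanDual C ↔ ∀ y ∈ C, x ⬝ᵥ y = 0 := by
  simp [euclideanDual, LinearMap.BilinForm.mem_orthogonal_iff, Matrix.toBilin'_apply',
    dotProduct_comm]

lemma finrank_euclideanDual (C : Submodule F (ι → F)) :
    Module.finrank F (euclideanDual C) = Fintype.card ι - Module.finrank F C := by
  have hnd : (Matrix.toBilin' (1 : Matrix ι ι F)).Nondegenerate :=
    Matrix.nondegenerate_toBilin'_iff.mpr (Matrix.nondegenerate_of_det_ne_zero (by simp))
  rw [euclideanDual, LinearMap.BilinForm.finrank_orthogonal hnd,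
    Module.finrank_fintype_fun_eq_card]

end

lemma Lagrange.coeff_card_nodal {ι R : Type*} [CommRing R] [Nontrivial R] (s : Finset ι)
    (x : ι → R) : (nodal s x).coeff #s = 1 := by
  simpa [natDegree_nodal] using (nodal_monic (s := s) (v := x)).coeff_natDegree

section

variable {F : Type*} [Field F] {n : ℕ} {a v : Fin n → F}

noncomputable def eGRSEncode (a v : Fin n → F) (k : ℕ) : F[X] →ₗ[F] Fin (n + 1) → F where
  toFun f := Fin.snoc (fun i => v i * f.eval (a i)) (f.coeff (k - 1))
  map_add' f g := by
    ext j; refine Fin.lastCases ?_ (fun i => ?_) j <;> simp [mul_add]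
  map_smul' c f := by
    ext j; refine Fin.lastCases ?_ (fun i => ?_) j <;> simp [mul_left_comm]

noncomputable def eGRS (a v : Fin n → F) (k : ℕ) : Submodule F (Fin (n + 1) → F) :=
  (degreeLT F k).map (eGRSEncode a v k)

lemma coe_eGRS (k : ℕ) : (eGRS a v k : Set (Fin (n + 1) → F)) = eGRSset a v k := by
  ext c
  simp [eGRS, eGRSset, eGRSEncode, mem_degreeLT, eq_comm]

lemma eGRSEncode_dotProduct_eGRSEncode (k l : ℕ) (g f : F[X]) :
    eGRSEncode a v (k + 1) g ⬝ᵥ eGRSEncode a v (l + 1) f =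
      ∑ i, v i ^ 2 * (g * f).eval (a i) + g.coeff k * f.coeff l := by
  simp only [dotProduct, Fin.sum_univ_castSucc, eGRSEncode, LinearMap.coe_mk, AddHom.coe_mk,
    Fin.snoc_castSucc, Fin.snoc_last, add_tsub_cancel_right, eval_mul]
  congr 1
  exact sum_congr rfl fun i _ => by ring

lemma eq_zero_of_eGRSEncode_eq_zero (ha : Function.Injective a) (hv : ∀ i, v i ≠ 0) {k : ℕ}
    (hk : k ≤ n + 1) {f : F[X]} (hf : f.degree < k) (h0 : eGRSEncode a v k f = 0) : f = 0 := by
  have hcoeff : f.coeff (k - 1) = 0 := by simpa [eGRSEncode] using congr_fun h0 (Fin.last n)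
  have hdeg : f.degree < (univ : Finset (Fin n)).card := by
    rw [degree_lt_iff_coeff_zero] at hf ⊢
    intro j hj
    rcases eq_or_ne j (k - 1) with rfl | hjk
    · exact hcoeff
    · exact hf j (by simp at hj; omega)
  refine eq_zero_of_degree_lt_of_eval_index_eq_zero _ ha.injOn hdeg fun i _ => ?_
  simpa [eGRSEncode, hv i] using congr_fun h0 i.castSucc

lemma finrank_eGRS (ha : Function.Injective a) (hv : ∀ i, v i ≠ 0) {k : ℕ} (hk : k ≤ n + 1) :
    Module.finrank F (eGRS a v k) = k := by
  have hinj : Function.Injective ((eGRSEncode a v k).comp (degreeLT F k).subtype) := by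
    rw [← LinearMap.ker_eq_bot, LinearMap.ker_eq_bot']
    rintro ⟨f, hf⟩ h0
    exact Subtype.ext (eq_zero_of_eGRSEncode_eq_zero ha hv hk (mem_degreeLT.mp hf) h0)
  rw [eGRS, ← Submodule.range_subtype (degreeLT F k), ← LinearMap.range_comp,
    LinearMap.finrank_range_of_inj hinj, (degreeLTEquiv F k).finrank_eq, Module.finrank_fin_fun]

lemma eGRS_le_euclideanDual (ha : Function.Injective a)
    (hV : ∀ i, v i ^ 2 = -(∏ j ∈ univ.erase i, (a i - a j))⁻¹) {k l : ℕ} (hkl : k + l + 1 = n) :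
    eGRS a v (k + 1) ≤ euclideanDual (eGRS a v (l + 1)) := by
  rintro _ ⟨g, hg, rfl⟩
  rw [mem_euclideanDual]
  rintro _ ⟨f, hf, rfl⟩
  have hgk : g.natDegree ≤ k :=
    natDegree_le_iff_degree_le.mpr (Order.le_of_lt_succ (mem_degreeLT.mp hg))
  have hfl : f.natDegree ≤ l :=
    natDegree_le_iff_degree_le.mpr (Order.le_of_lt_succ (mem_degreeLT.mp hf))
  have hdeg : (g * f).degree < (univ : Finset (Fin n)).card := by
    rw [card_univ, Fintype.card_fin]
    exact degree_le_natDegree.trans_lt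
      (by exact_mod_cast (natDegree_mul_le.trans (add_le_add hgk hfl)).trans_lt (by omega))
  have htop : (g * f).coeff ((univ : Finset (Fin n)).card - 1) = g.coeff k * f.coeff l := by
    rw [card_univ, Fintype.card_fin, ← hkl, add_tsub_cancel_right]
    exact coeff_mul_add_eq_of_natDegree_le hgk hfl
  rw [eGRSEncode_dotProduct_eGRSEncode, ← htop, Lagrange.coeff_eq_sum ha.injOn hdeg,
    ← sum_add_distrib]
  exact sum_eq_zero fun i _ => by rw [hV i]; ring

lemma eGRS_eq_euclideanDual (ha : Function.Injective a) (hv : ∀ i, v i ≠ 0)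
    (hV : ∀ i, v i ^ 2 = -(∏ j ∈ univ.erase i, (a i - a j))⁻¹) {k l : ℕ} (hkl : k + l + 1 = n) :
    eGRS a v (k + 1) = euclideanDual (eGRS a v (l + 1)) := by
  refine Submodule.eq_of_le_of_finrank_eq (eGRS_le_euclideanDual ha hV hkl) ?_
  rw [finrank_euclideanDual, finrank_eGRS ha hv (by omega), finrank_eGRS ha hv (by omega),
    Fintype.card_fin]
  omega

lemma sq_eq_neg_inv_prod_of_eGRS_le_euclideanDual (ha : Function.Injective a) {k l : ℕ}
    (hkl : k + l + 1 = n)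
    (h : eGRS a v (k + 1) ≤ euclideanDual (eGRS a v (l + 1))) (i : Fin n) :
    v i ^ 2 = -(∏ j ∈ univ.erase i, (a i - a j))⁻¹ := by
  obtain ⟨t, hti, htl⟩ := exists_subset_card_eq (s := univ.erase i) (n := l) (by simp; omega)
  have hdk : #(univ.erase i \ t) = k := by rw [card_sdiff_of_subset hti]; simp; omega
  have hf : nodal t a ∈ degreeLT F (l + 1) := by
    rw [mem_degreeLT, degree_nodal, htl]; exact_mod_cast l.lt_succ_self
  have hg : nodal (univ.erase i \ t) a ∈ degreeLT F (k + 1) := by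
    rw [mem_degreeLT, degree_nodal, hdk]; exact_mod_cast k.lt_succ_self
  have hgf : nodal (univ.erase i \ t) a * nodal t a = nodal (univ.erase i) a := by
    simp only [nodal, prod_sdiff hti]
  have hpair := mem_euclideanDual.mp (h ⟨_, hg, rfl⟩) _ ⟨_, hf, rfl⟩
  rw [eGRSEncode_dotProduct_eGRSEncode, hgf, ← hdk, ← htl, coeff_card_nodal,
    coeff_card_nodal, sum_eq_single i, eval_nodal] at hpair
  · have hP : ∏ j ∈ univ.erase i, (a i - a j) ≠ 0 :=
      prod_ne_zero_iff.mpr fun j hj => sub_ne_zero.mpr (ha.ne (ne_of_mem_erase hj).symm)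
    field_simp
    linear_combination hpair
  · exact fun j _ hj => by
      rw [eval_nodal_at_node (mem_erase.mpr ⟨hj, mem_univ j⟩), mul_zero]
  · simp

end

theorem extended_GRS_euclidean_dual_iff_general (n m : ℕ) (F : Type*) [Field F]
    (a v : Fin n → F) (ha : Function.Injective a) (hv : ∀ i, v i ≠ 0)
    (u : Fin n → F) (hu : ∀ i, u i = (∏ j ∈ Finset.univ.erase i, (a i - a j))⁻¹)
    (hm1 : 1 ≤ m) (hm2 : m ≤ (n + 1) / 2) :
    {x : Fin (n + 1) → F | ∀ y ∈ eGRSset a v m, ∑ i, x i * y i = 0} =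
        eGRSset a v (n + 1 - m) ↔
      ∀ i, (v i) ^ 2 = - u i := by
  obtain ⟨l, rfl⟩ : ∃ l, m = l + 1 := ⟨m - 1, by omega⟩
  obtain ⟨k, hk⟩ : ∃ k, n + 1 - (l + 1) = k + 1 := ⟨n - (l + 1), by omega⟩
  have hkl : k + l + 1 = n := by omega
  have hdual : {x : Fin (n + 1) → F | ∀ y ∈ eGRSset a v (l + 1), ∑ i, x i * y i = 0} =
      euclideanDual (eGRS a v (l + 1)) := by
    ext x
    simp [mem_euclideanDual, ← coe_eGRS, dotProduct]
  simp_rw [hu]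
  rw [hk, hdual, ← coe_eGRS, SetLike.coe_set_eq, eq_comm]
  exact ⟨fun h => sq_eq_neg_inv_prod_of_eGRS_le_euclideanDual ha hkl h.le,
    fun hV => eGRS_eq_euclideanDual ha hv hV hkl⟩

theorem extended_GRS_euclidean_dual_iff (q n m : ℕ) (hq : IsPrimePow q) (hqodd : Odd q)
    (F : Type*) [Field F] [Fintype F] (hcard : Fintype.card F = q)
    (a v : Fin n → F) (ha : Function.Injective a) (hv : ∀ i, v i ≠ 0)
    (u : Fin n → F) (hu : ∀ i, u i = (∏ j ∈ Finset.univ.erase i, (a i - a j))⁻¹)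
    (hm1 : 1 ≤ m) (hm2 : m ≤ (n + 1) / 2) :
    {x : Fin (n + 1) → F | ∀ y ∈ eGRSset a v m, ∑ i, x i * y i = 0} =
        eGRSset a v (n + 1 - m) ↔
      ∀ i, (v i) ^ 2 = - u i :=
  extended_GRS_euclidean_dual_iff_general n m F a v ha hv u hu hm1 hm2
end

section
/- Let q = p^{em} with p an odd prime, V an r-dimensional F_{p^e}-subspace of F_q with V ∩ F_{p^e} = {0}, ω ∈ F_{p^e}^* a primitive t-th root of unity where t ∣ p^e - 1, and let the evaluation set be A = ∪_{j=0}^{t-1} (ω^j + V) with |A| = t p^{er}. Then for every a ∈ ω^{j_0} + V, the quantity u_a = ∏_{a' ∈ A, a' ≠ a} (a - a')^{-1} satisfies u_a^{-1} = ω^{-j_0 p^{er}} · b, where b = (∏_{0≠γ∈V} γ) · (∏_{γ∈V} ∏_{d=1}^{t-1} (1 + γ - ω^d)) is independent of a. -/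
theorem prod_diffs_coset_union (p e m r t : ℕ) (hp : p.Prime) (hpodd : Odd p)
    (he : 0 < e) (hm : 0 < m) (ht0 : 0 < t) (ht : t ∣ p ^ e - 1)
    (F : Type*) [Field F] [Fintype F] [DecidableEq F] [CharP F p]
    (hcard : Fintype.card F = p ^ (e * m))
    -- V is an r-dimensional F_{p^e}-subspace of F_q with V ∩ F_{p^e} = {0}
    (V : Finset F) (hV0 : (0 : F) ∈ V)
    (hVadd : ∀ x ∈ V, ∀ y ∈ V, x + y ∈ V)
    (hVsmul : ∀ c : F, c ^ (p ^ e) = c → ∀ x ∈ V, c * x ∈ V)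
    (hVcard : V.card = p ^ (e * r))
    (hVint : ∀ x ∈ V, x ^ (p ^ e) = x → x = 0)
    -- ω ∈ F_{p^e}^* is a primitive t-th root of unity
    (ω : F) (hω : ω ^ (p ^ e) = ω) (hωt : ω ^ t = 1)
    (hωprim : ∀ d : ℕ, 0 < d → d < t → ω ^ d ≠ 1)
    -- the evaluation set A = ∪_{j<t} (ω^j + V)
    (A : Finset F)
    (hA : A = (Finset.range t).biUnion (fun j => V.image (fun γ => ω ^ j + γ)))
    (hAcard : A.card = t * p ^ (e * r))
    (j₀ : ℕ) (hj₀ : j₀ < t) (γ₀ : F) (hγ₀ : γ₀ ∈ V) (x : F) (hx : x = ω ^ j₀ + γ₀) :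
    ∏ y ∈ A.erase x, (x - y) =
      (ω ^ (j₀ * p ^ (e * r)))⁻¹ *
        ((∏ γ ∈ V.erase 0, γ) *
          ∏ γ ∈ V, ∏ d ∈ Finset.Icc 1 (t - 1), (1 + γ - ω ^ d)) := by
  classical
  have hωne : ω ≠ 0 := by
    intro h
    rw [h, zero_pow ht0.ne'] at hωt
    exact zero_ne_one hωt
  have hωjfix : ∀ k : ℕ, (ω ^ k) ^ (p ^ e) = ω ^ k := by
    intro k
    rw [← pow_mul, mul_comm, pow_mul, hω]
  have hVneg : ∀ γ ∈ V, -γ ∈ V := by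
    intro γ hγ
    have h1 : ((-1 : F)) ^ (p ^ e) = -1 := (hpodd.pow).neg_one_pow
    simpa using hVsmul (-1) h1 γ hγ
  have hVsub : ∀ a ∈ V, ∀ b ∈ V, a - b ∈ V := by
    intro a ha b hb
    rw [sub_eq_add_neg]
    exact hVadd a ha _ (hVneg b hb)
  have hωmod : ∀ a : ℕ, ω ^ a = ω ^ (a % t) := by
    intro a
    conv_lhs => rw [← Nat.div_add_mod a t]
    rw [pow_add, pow_mul, hωt, one_pow, one_mul]
  have hmod : ∀ a : ℕ, a < 2 * t →
      (a % t = a ∧ a < t) ∨ (a % t = a - t ∧ t ≤ a) := by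
    intro a ha
    rcases lt_or_ge a t with h | h
    · exact Or.inl ⟨Nat.mod_eq_of_lt h, h⟩
    · refine Or.inr ⟨?_, h⟩
      rw [Nat.mod_eq_sub_mod h, Nat.mod_eq_of_lt (by omega)]
  set f : ℕ × F → F := fun pr => ω ^ pr.1 + pr.2 with hf
  set s : Finset (ℕ × F) := Finset.range t ×ˢ V with hs
  have hAim : A = s.image f := by
    rw [hA]
    ext y
    simp only [Finset.mem_biUnion, Finset.mem_image, Finset.mem_range, hs, hf,
      Finset.mem_product]
    constructor
    · rintro ⟨j, hj, γ, hγ, rfl⟩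
      exact ⟨(j, γ), ⟨hj, hγ⟩, rfl⟩
    · rintro ⟨⟨j, γ⟩, ⟨hj, hγ⟩, rfl⟩
      exact ⟨j, hj, γ, hγ, rfl⟩
  have hscard : s.card = t * p ^ (e * r) := by
    rw [hs, Finset.card_product, Finset.card_range, hVcard]
  have hinj : Set.InjOn f s := by
    apply Finset.injOn_of_card_image_eq
    rw [← hAim, hAcard, hscard]
  have hpt : (j₀, γ₀) ∈ s := by
    simp [hs, Finset.mem_product, hj₀, hγ₀]
  have hxf : x = f (j₀, γ₀) := hx
  have herase : A.erase x = (s.erase (j₀, γ₀)).image f := by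
    ext y
    simp only [Finset.mem_erase, Finset.mem_image, hAim]
    constructor
    · rintro ⟨hne, a, ha, rfl⟩
      exact ⟨a, ⟨fun h => hne (by rw [h, ← hxf]), ha⟩, rfl⟩
    · rintro ⟨a, ⟨hane, ha⟩, rfl⟩
      exact ⟨fun h => hane (hinj ha hpt (h.trans hxf)), a, ha, rfl⟩
  rw [herase, Finset.prod_image (fun a ha b hb hab =>
    hinj (Finset.mem_of_mem_erase ha) (Finset.mem_of_mem_erase hb) hab)]
  have hsplit : s.erase (j₀, γ₀) =
      (((Finset.range t).erase j₀) ×ˢ V) ∪ ({j₀} ×ˢ (V.erase γ₀)) := by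
    ext ⟨j, γ⟩
    simp only [Finset.mem_erase, Finset.mem_product, Finset.mem_union, Finset.mem_singleton,
      hs, Prod.mk.injEq, Finset.mem_range, ne_eq, not_and]
    constructor
    · rintro ⟨hne, hj, hγ⟩
      by_cases h : j = j₀
      · subst h
        exact Or.inr ⟨rfl, hne rfl, hγ⟩
      · exact Or.inl ⟨⟨h, hj⟩, hγ⟩
    · rintro (⟨⟨hjne, hj⟩, hγ⟩ | ⟨hj, hγne, hγ⟩)
      · exact ⟨fun h => absurd h hjne, hj, hγ⟩
      · exact ⟨fun _ h => hγne h, hj ▸ hj₀, hγ⟩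
  have hdisj : Disjoint (((Finset.range t).erase j₀) ×ˢ V) ({j₀} ×ˢ (V.erase γ₀)) := by
    rw [Finset.disjoint_left]
    rintro ⟨j, γ⟩ h1 h2
    simp only [Finset.mem_product, Finset.mem_erase, Finset.mem_singleton] at h1 h2
    exact h1.1.1 h2.1
  rw [hsplit, Finset.prod_union hdisj]
  -- reindexing lemmas
  have hterm2 : ∏ γ ∈ V.erase γ₀, (γ₀ - γ) = ∏ γ ∈ V.erase 0, γ := by
    apply Finset.prod_nbij' (fun γ => γ₀ - γ) (fun δ => γ₀ - δ)
    · intro a ha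
      rw [Finset.mem_erase] at ha ⊢
      exact ⟨sub_ne_zero.mpr (Ne.symm ha.1), hVsub _ hγ₀ _ ha.2⟩
    · intro b hb
      rw [Finset.mem_erase] at hb ⊢
      exact ⟨fun h => hb.1 (sub_eq_self.mp h), hVsub _ hγ₀ _ hb.2⟩
    · intro a _; exact sub_sub_cancel γ₀ a
    · intro a _; exact sub_sub_cancel γ₀ a
    · intro a _; rfl
  have hinner1 : ∀ c : F, ∏ γ ∈ V, (c + (γ₀ - γ)) = ∏ γ ∈ V, (c + γ) := by
    intro c
    apply Finset.prod_nbij' (fun γ => γ₀ - γ) (fun δ => γ₀ - δ)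
    · intro a ha; exact hVsub _ hγ₀ _ ha
    · intro a ha; exact hVsub _ hγ₀ _ ha
    · intro a _; exact sub_sub_cancel γ₀ a
    · intro a _; exact sub_sub_cancel γ₀ a
    · intro a _; rfl
  have hωj₀ne : (ω : F) ^ j₀ ≠ 0 := pow_ne_zero _ hωne
  have hinvfix : ((ω ^ j₀)⁻¹) ^ (p ^ e) = (ω ^ j₀)⁻¹ := by
    rw [inv_pow, hωjfix]
  have hscale : ∀ c : F,
      ∏ γ ∈ V, (ω ^ j₀ * c + γ) = ω ^ (j₀ * p ^ (e * r)) * ∏ γ ∈ V, (c + γ) := by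
    intro c
    have step1 : ∏ γ ∈ V, (ω ^ j₀ * (c + γ)) = ∏ γ ∈ V, (ω ^ j₀ * c + γ) := by
      apply Finset.prod_nbij' (fun γ => ω ^ j₀ * γ) (fun γ => (ω ^ j₀)⁻¹ * γ)
      · intro a ha; exact hVsmul _ (hωjfix j₀) _ ha
      · intro a ha; exact hVsmul _ hinvfix _ ha
      · intro a _; exact inv_mul_cancel_left₀ hωj₀ne a
      · intro a _; exact mul_inv_cancel_left₀ hωj₀ne a
      · intro a _; rw [mul_add]
    rw [← step1, Finset.prod_mul_distrib, Finset.prod_const, hVcard, ← pow_mul]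
  -- term 2 : j = j₀
  have h2 : ∏ a ∈ ({j₀} ×ˢ (V.erase γ₀)), (x - f a) = ∏ γ ∈ V.erase 0, γ := by
    rw [Finset.prod_product, Finset.prod_singleton]
    rw [← hterm2]
    apply Finset.prod_congr rfl
    intro γ _
    rw [hx, hf]
    ring
  -- term 1 : j ≠ j₀
  have h1 : ∏ a ∈ (((Finset.range t).erase j₀) ×ˢ V), (x - f a)
      = (ω ^ (j₀ * p ^ (e * r))) ^ (t - 1) *
        ∏ d ∈ Finset.Icc 1 (t - 1), ∏ γ ∈ V, (1 + γ - ω ^ d) := by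
    rw [Finset.prod_product]
    have key : ∏ d ∈ Finset.Icc 1 (t - 1),
        (ω ^ (j₀ * p ^ (e * r)) * ∏ γ ∈ V, (1 + γ - ω ^ d))
        = ∏ j ∈ (Finset.range t).erase j₀, ∏ γ ∈ V, (x - f (j, γ)) := by
      apply Finset.prod_nbij' (fun d => (j₀ + d) % t) (fun j => (j + (t - j₀)) % t)
      · intro d hd
        rw [Finset.mem_Icc] at hd
        rw [Finset.mem_erase, Finset.mem_range]
        constructor
        · intro heq
          replace heq : (j₀ + d) % t = j₀ := heq
          rcases hmod (j₀ + d) (by omega) with ⟨h1, h2⟩ | ⟨h1, h2⟩ <;> omega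
        · exact Nat.mod_lt _ ht0
      · intro j hj
        rw [Finset.mem_erase, Finset.mem_range] at hj
        rw [Finset.mem_Icc]
        show 1 ≤ (j + (t - j₀)) % t ∧ (j + (t - j₀)) % t ≤ t - 1
        rcases hmod (j + (t - j₀)) (by omega) with ⟨h1, h2⟩ | ⟨h1, h2⟩ <;>
          rw [h1] <;> omega
      · intro d hd
        rw [Finset.mem_Icc] at hd
        rw [Nat.mod_add_mod]
        have heq : j₀ + d + (t - j₀) = d + t := by omega
        rw [heq, Nat.add_mod_right, Nat.mod_eq_of_lt (by omega)]
      · intro j hj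
        rw [Finset.mem_erase, Finset.mem_range] at hj
        rw [Nat.add_mod_mod]
        have heq : j₀ + (j + (t - j₀)) = j + t := by omega
        rw [heq, Nat.add_mod_right, Nat.mod_eq_of_lt hj.2]
      · intro d hd
        rw [Finset.mem_Icc] at hd
        have hpow : ω ^ ((j₀ + d) % t) = ω ^ j₀ * ω ^ d := by
          rw [← hωmod, pow_add]
        have e1 : ∏ γ ∈ V, (x - f ((j₀ + d) % t, γ))
            = ∏ γ ∈ V, (ω ^ j₀ * (1 - ω ^ d) + (γ₀ - γ)) := by
          apply Finset.prod_congr rfl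
          intro γ _
          simp only [hf, hpow, hx]
          ring
        rw [e1, hinner1, hscale]
        congr 1
        apply Finset.prod_congr rfl
        intro γ _
        ring
    rw [← key, Finset.prod_mul_distrib, Finset.prod_const, Nat.card_Icc]
    congr 2
  rw [h1, h2]
  have hainv : (ω ^ (j₀ * p ^ (e * r))) ^ (t - 1) = (ω ^ (j₀ * p ^ (e * r)))⁻¹ := by
    apply eq_inv_of_mul_eq_one_left
    rw [← pow_succ, Nat.sub_add_cancel ht0, ← pow_mul, mul_comm (j₀ * p ^ (e * r)) t,
      pow_mul, hωt, one_pow]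
  rw [hainv, Finset.prod_comm]
  ring
end

section
/- Let C be an [n,k] linear code over F_q with parity check matrix H, q = p^h, and 0 ≤ e ≤ h-1. Then rank(H H^{T_e}) = n - k - dim Hull_e(C), where H^{T_e} denotes the transpose of the matrix obtained by raising each entry of H to the power p^{h-e}, and Hull_e(C) = C ∩ C^{⊥_e}. -/
/-- The `e`-Galois dual relative to the inner product `⟨x, y⟩ = ∑ i, x i * (y i)^pe`. -/
def galoisDual {F : Type*} [Field F] {ι : Type*} [Fintype ι] (pe : ℕ)
    (C : Submodule F (ι → F)) : Submodule F (ι → F) where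
  carrier := {x | ∀ y ∈ C, ∑ i, x i * (y i) ^ pe = 0}
  add_mem' := by
    intro x y hx hy z hz
    simp only [Pi.add_apply, add_mul, Finset.sum_add_distrib]
    rw [hx z hz, hy z hz, add_zero]
  zero_mem' := by
    intro y _
    simp
  smul_mem' := by
    intro c x hx y hy
    simp only [Pi.smul_apply, smul_eq_mul, mul_assoc, ← Finset.mul_sum]
    rw [hx y hy, mul_zero]

lemma mem_galoisDual' {F : Type*} [Field F] {ι : Type*} [Fintype ι] {pe : ℕ}
    {C : Submodule F (ι → F)} {x : ι → F} :
    x ∈ galoisDual pe C ↔ ∀ y ∈ C, ∑ i, x i * (y i) ^ pe = 0 := Iff.rfl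

open Module Matrix

/-- The dot product, as a linear map into the dual space. -/
noncomputable def dotL (F : Type*) [Field F] (n : ℕ) :
    (Fin n → F) →ₗ[F] Module.Dual F (Fin n → F) :=
  LinearMap.mk₂ F (fun w c => dotProduct w c)
    (fun _ _ _ => by simp [add_dotProduct])
    (fun _ _ _ => by simp [smul_dotProduct])
    (fun _ _ _ => by simp [dotProduct_add])
    (fun _ _ _ => by simp [dotProduct_smul])

lemma dotL_apply {F : Type*} [Field F] {n : ℕ} (w c : Fin n → F) :
    dotL F n w c = dotProduct w c := rfl

lemma dotL_injective (F : Type*) [Field F] (n : ℕ) :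
    Function.Injective (dotL F n) := by
  intro a b hab
  funext i
  have h := congrArg (fun f => f (Pi.single i (1 : F))) hab
  simpa [dotL_apply, dotProduct_single] using h

lemma finrank_galoisDual_one_le {F : Type*} [Field F] {n : ℕ}
    (C : Submodule F (Fin n → F)) :
    finrank F (galoisDual 1 C) ≤ n - finrank F C := by
  have hmap : (galoisDual 1 C).map (dotL F n) ≤ C.dualAnnihilator := by
    rintro f ⟨w, hw, rfl⟩
    rw [Submodule.mem_dualAnnihilator]
    intro c hc
    have h := hw c hc
    simpa [dotL_apply, dotProduct] using h
  have h1 : finrank F (galoisDual 1 C) = finrank F ((galoisDual 1 C).map (dotL F n)) :=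
    (Submodule.equivMapOfInjective _ (dotL_injective F n) _).finrank_eq
  have h2 : finrank F ((galoisDual 1 C).map (dotL F n)) ≤ finrank F C.dualAnnihilator :=
    Submodule.finrank_mono hmap
  have h3 : finrank F C.dualAnnihilator = finrank F ((Fin n → F) ⧸ C) :=
    (Subspace.quotEquivAnnihilator C).finrank_eq.symm
  have h4 := Submodule.finrank_quotient_add_finrank C
  rw [Module.finrank_fin_fun] at h4
  omega

lemma rowspace_eq_dual {F : Type*} [Field F] {n k : ℕ}
    (C : Submodule F (Fin n → F)) (hk : finrank F C = k)
    (H : Matrix (Fin (n - k)) (Fin n) F) (hHrank : H.rank = n - k)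
    (hH : ∀ x : Fin n → F, x ∈ C ↔ H.mulVec x = 0) :
    LinearMap.range (Matrix.mulVecLin Hᵀ) = galoisDual 1 C := by
  have hle : LinearMap.range (Matrix.mulVecLin Hᵀ) ≤ galoisDual 1 C := by
    rintro w ⟨x, rfl⟩
    rw [mem_galoisDual']
    intro y hy
    have hy0 : H.mulVec y = 0 := (hH y).mp hy
    have key : dotProduct (Hᵀ.mulVec x) y = dotProduct x (H.mulVec y) := by
      rw [Matrix.dotProduct_mulVec, Matrix.mulVec_transpose]
    rw [hy0] at key
    simp only [dotProduct_zero] at key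
    simpa [Matrix.mulVecLin_apply, dotProduct, pow_one, Matrix.mulVec_transpose] using key
  have h1 : finrank F (LinearMap.range (Matrix.mulVecLin Hᵀ)) = n - k := by
    have ht := Matrix.rank_transpose H
    rw [hHrank] at ht
    exact ht
  have h2 : finrank F (galoisDual 1 C) ≤ n - k := by
    have := finrank_galoisDual_one_le C
    rw [hk] at this
    exact this
  exact Submodule.eq_of_le_of_finrank_le hle (by rw [h1]; exact h2)

theorem rank_parity_check_galois (p h e n k : ℕ) (hp : p.Prime) (hh : 0 < h)
    (he : e ≤ h - 1)
    (F : Type*) [Field F] [Fintype F] [DecidableEq F] [CharP F p]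
    (hcard : Fintype.card F = p ^ h) (hkn : k ≤ n)
    (C : Submodule F (Fin n → F)) (hk : Module.finrank F C = k)
    (H : Matrix (Fin (n - k)) (Fin n) F) (hHrank : H.rank = n - k)
    (hH : ∀ x : Fin n → F, x ∈ C ↔ H.mulVec x = 0) :
    (H * (H.map (fun x => x ^ (p ^ (h - e)))).transpose).rank =
      n - k - Module.finrank F ↥(C ⊓ galoisDual (p ^ e) C) := by
  classical
  have hfp : Fact p.Prime := ⟨hp⟩
  have hq0 : p ^ (h - e) ≠ 0 := pow_ne_zero _ hp.pos.ne'
  -- Frobenius facts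
  have hpow_inj : ∀ a b : F, a ^ p ^ (h - e) = b ^ p ^ (h - e) → a = b := by
    intro a b hab
    have h1 : iterateFrobenius F p (h - e) a = iterateFrobenius F p (h - e) b := by
      simpa [iterateFrobenius_def] using hab
    exact (iterateFrobenius F p (h - e)).injective h1
  have hpow_surj : Function.Surjective (fun a : F => a ^ p ^ (h - e)) :=
    Finite.injective_iff_surjective.mp (fun a b hab => hpow_inj a b hab)
  have hcoe : ∀ a : F, (a ^ p ^ e) ^ p ^ (h - e) = a := by
    intro a
    rw [← pow_mul, ← pow_add]
    have hpe : e + (h - e) = h := by omega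
    rw [hpe, ← hcard]
    exact FiniteField.pow_card a
  set B := H.map (fun x : F => x ^ p ^ (h - e)) with hB
  set M := H * Bᵀ with hM
  -- entrywise Frobenius identity for B
  have hBmul : ∀ u : Fin n → F,
      B.mulVec (fun i => u i ^ p ^ (h - e)) = fun j => (H.mulVec u j) ^ p ^ (h - e) := by
    intro u
    funext j
    simp only [Matrix.mulVec, dotProduct, Matrix.map_apply, hB]
    rw [sum_pow_char_pow (R := F) (p := p) (n := h - e)]
    simp [mul_pow]
  -- dual sum identity
  have hdual : ∀ u y : Fin n → F,
      (∑ i, u i * y i ^ p ^ e) ^ p ^ (h - e) = ∑ i, u i ^ p ^ (h - e) * y i := by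
    intro u y
    rw [sum_pow_char_pow (R := F) (p := p) (n := h - e)]
    exact Finset.sum_congr rfl fun i _ => by rw [mul_pow, hcoe]
  have hMT : ∀ x : Fin (n - k) → F, Mᵀ.mulVec x = B.mulVec (Hᵀ.mulVec x) := by
    intro x
    rw [hM, Matrix.transpose_mul, Matrix.transpose_transpose, Matrix.mulVec_mulVec]
  -- rowspace = standard dual
  have hrow := rowspace_eq_dual C hk H hHrank hH
  -- injectivity of x ↦ Hᵀ *ᵥ x
  have hrangerank : finrank F (LinearMap.range (Matrix.mulVecLin Hᵀ)) = n - k := by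
    have ht := Matrix.rank_transpose H
    rw [hHrank] at ht
    exact ht
  have hHTinj : Function.Injective (Matrix.mulVecLin Hᵀ) := by
    rw [← LinearMap.ker_eq_bot]
    have hrn := LinearMap.finrank_range_add_finrank_ker (Matrix.mulVecLin Hᵀ)
    rw [hrangerank, Module.finrank_fin_fun] at hrn
    have h0 : finrank F (LinearMap.ker (Matrix.mulVecLin Hᵀ)) = 0 := by omega
    exact Submodule.finrank_eq_zero.mp h0
  -- choose Frobenius roots
  choose rt hrt using hpow_surj
  have hrtinj : Function.Injective rt := by
    intro a b hab
    rw [← hrt a, ← hrt b, hab]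
  -- forward map: kernel → hull
  have hSofK : ∀ x : Fin (n - k) → F, x ∈ LinearMap.ker (Matrix.mulVecLin Mᵀ) →
      (fun i => rt (Hᵀ.mulVec x i)) ∈ C ⊓ galoisDual (p ^ e) C := by
    intro x hx
    have hx0 : B.mulVec (Hᵀ.mulVec x) = 0 := by
      rw [← hMT]
      have h' : Mᵀ.mulVecLin x = 0 := hx
      rw [Matrix.mulVecLin_apply] at h'
      exact h'
    have hup : (fun i => (rt (Hᵀ.mulVec x i)) ^ p ^ (h - e)) = Hᵀ.mulVec x := by
      funext i; exact hrt _
    have huC : (fun i => rt (Hᵀ.mulVec x i)) ∈ C := by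
      rw [hH]
      funext j
      have hz : (fun j => (H.mulVec (fun i => rt (Hᵀ.mulVec x i)) j) ^ p ^ (h - e))
          = (0 : Fin (n - k) → F) := by
        rw [← hBmul, hup, hx0]
      have := congrFun hz j
      simp only [Pi.zero_apply] at this ⊢
      exact hpow_inj _ 0 (by rw [this, zero_pow hq0])
    refine Submodule.mem_inf.mpr ⟨huC, ?_⟩
    rw [mem_galoisDual']
    intro y hy
    have hwdual : Hᵀ.mulVec x ∈ galoisDual 1 C := by
      rw [← hrow]
      exact ⟨x, by rw [Matrix.mulVecLin_apply]⟩
    have h0 : ∑ i, (Hᵀ.mulVec x) i * y i ^ 1 = 0 := (mem_galoisDual'.mp hwdual) y hy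
    simp only [pow_one] at h0
    apply hpow_inj _ 0
    rw [hdual, zero_pow hq0]
    have hsc : ∑ i, (rt (Hᵀ.mulVec x i)) ^ p ^ (h - e) * y i = ∑ i, (Hᵀ.mulVec x) i * y i :=
      Finset.sum_congr rfl fun i _ => by rw [congrFun hup i]
    rw [hsc, h0]
  -- backward map: hull → kernel
  have hKofS : ∀ u : Fin n → F, u ∈ C ⊓ galoisDual (p ^ e) C →
      ∃ x, x ∈ LinearMap.ker (Matrix.mulVecLin Mᵀ) ∧
        Hᵀ.mulVec x = fun i => u i ^ p ^ (h - e) := by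
    intro u hu
    obtain ⟨huC, huD⟩ := Submodule.mem_inf.mp hu
    have hwdual : (fun i => u i ^ p ^ (h - e)) ∈ galoisDual 1 C := by
      rw [mem_galoisDual']
      intro y hy
      have h0 : ∑ i, u i * y i ^ p ^ e = 0 := (mem_galoisDual'.mp huD) y hy
      have hd := hdual u y
      rw [h0, zero_pow hq0] at hd
      simpa [pow_one] using hd.symm
    rw [← hrow] at hwdual
    obtain ⟨x, hx⟩ := hwdual
    have hx' : Hᵀ.mulVec x = fun i => u i ^ p ^ (h - e) := by
      rw [Matrix.mulVecLin_apply] at hx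
      exact hx
    refine ⟨x, ?_, hx'⟩
    rw [LinearMap.mem_ker]
    have hu0 : H.mulVec u = 0 := (hH u).mp huC
    have : Mᵀ.mulVec x = 0 := by
      rw [hMT, hx', hBmul]
      funext j
      rw [congrFun hu0 j]
      simp [zero_pow hq0]
    rw [Matrix.mulVecLin_apply]
    exact this
  -- cardinality comparison
  have hfin : Finite ↥(C ⊓ galoisDual (p ^ e) C) := inferInstance
  have hfin2 : Finite ↥(LinearMap.ker (Matrix.mulVecLin Mᵀ)) := inferInstance
  have hcard1 : Nat.card ↥(LinearMap.ker (Matrix.mulVecLin Mᵀ))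
      ≤ Nat.card ↥(C ⊓ galoisDual (p ^ e) C) := by
    apply Nat.card_le_card_of_injective
      (fun x : ↥(LinearMap.ker (Matrix.mulVecLin Mᵀ)) =>
        (⟨fun i => rt (Hᵀ.mulVec x.1 i), hSofK x.1 x.2⟩ : ↥(C ⊓ galoisDual (p ^ e) C)))
    intro a b hab
    have h1 : (fun i => rt (Hᵀ.mulVec a.1 i)) = fun i => rt (Hᵀ.mulVec b.1 i) :=
      congrArg Subtype.val hab
    have h2 : Hᵀ.mulVec a.1 = Hᵀ.mulVec b.1 := funext fun i => hrtinj (congrFun h1 i)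
    have h3 : Matrix.mulVecLin Hᵀ a.1 = Matrix.mulVecLin Hᵀ b.1 := by
      rw [Matrix.mulVecLin_apply, Matrix.mulVecLin_apply]
      exact h2
    exact Subtype.ext (hHTinj h3)
  have hcard2 : Nat.card ↥(C ⊓ galoisDual (p ^ e) C)
      ≤ Nat.card ↥(LinearMap.ker (Matrix.mulVecLin Mᵀ)) := by
    choose xf hxf1 hxf2 using hKofS
    apply Nat.card_le_card_of_injective
      (fun u : ↥(C ⊓ galoisDual (p ^ e) C) =>
        (⟨xf u.1 u.2, hxf1 u.1 u.2⟩ : ↥(LinearMap.ker (Matrix.mulVecLin Mᵀ))))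
    intro a b hab
    have h0 : xf a.1 a.2 = xf b.1 b.2 := congrArg Subtype.val hab
    have h1 : Hᵀ.mulVec (xf a.1 a.2) = Hᵀ.mulVec (xf b.1 b.2) := by rw [h0]
    rw [hxf2, hxf2] at h1
    exact Subtype.ext (funext fun i => hpow_inj _ _ (congrFun h1 i))
  have hceq := le_antisymm hcard1 hcard2
  -- convert cardinality to finrank
  have hfr : finrank F ↥(LinearMap.ker (Matrix.mulVecLin Mᵀ))
      = finrank F ↥(C ⊓ galoisDual (p ^ e) C) := by
    have i1 : Fintype ↥(LinearMap.ker (Matrix.mulVecLin Mᵀ)) := Fintype.ofFinite _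
    have i2 : Fintype ↥(C ⊓ galoisDual (p ^ e) C) := Fintype.ofFinite _
    have e1 : Nat.card ↥(LinearMap.ker (Matrix.mulVecLin Mᵀ))
        = Fintype.card F ^ finrank F ↥(LinearMap.ker (Matrix.mulVecLin Mᵀ)) := by
      rw [Nat.card_eq_fintype_card]; exact card_eq_pow_finrank
    have e2 : Nat.card ↥(C ⊓ galoisDual (p ^ e) C)
        = Fintype.card F ^ finrank F ↥(C ⊓ galoisDual (p ^ e) C) := by
      rw [Nat.card_eq_fintype_card]; exact card_eq_pow_finrank
    have hF2 : 2 ≤ Fintype.card F := Fintype.one_lt_card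
    refine Nat.pow_right_injective hF2 ?_
    show Fintype.card F ^ finrank F ↥(LinearMap.ker (Matrix.mulVecLin Mᵀ))
        = Fintype.card F ^ finrank F ↥(C ⊓ galoisDual (p ^ e) C)
    rw [← e1, ← e2]
    exact hceq
  -- rank-nullity
  have hrn := LinearMap.finrank_range_add_finrank_ker (Matrix.mulVecLin Mᵀ)
  rw [Module.finrank_fin_fun] at hrn
  have hrtM : M.rank = Mᵀ.rank := (Matrix.rank_transpose M).symm
  have hdef : Mᵀ.rank = finrank F (LinearMap.range (Matrix.mulVecLin Mᵀ)) := rfl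
  -- finish
  have hkerle : finrank F ↥(LinearMap.ker (Matrix.mulVecLin Mᵀ)) ≤ n - k := by omega
  omega
end
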